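/- Let F be a unit vector in Im 𝕆, and let α, β lie in the (1,0)-space T_F^{1,0} = {v ∈ F^⊥ ⊗ ℂ : F × v = i v}. Then α × β̄ = i (α, β̄) F. -/

import Mathlib

/-!
For real `a`, the double-cross identity gives `a × s = -(s × a)` with `s = a × a`, so
`(s, s) = (a, a × s)` vanishes by the invariance of the form; `s` being real, positivity
forces `s = 0`. Writing `u = r + i s` with `r, s` real extends `u × u = 0` to all `u`,
so `×` is alternating.

Since `F` is real, conjugating `F × β = i β` gives `F × β̄ = -i β̄`, and alternation gives
`α × F = -i α`. Eigenvectors of `F × ·` with nonzero eigenvalue are orthogonal to `F`, as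
`(F, F × v) = (F × F, v) = 0`. The identity
`α × (F × β̄) + (α × F) × β̄ = 2 (α, β̄) F - (α, F) β̄ - (F, β̄) α` then reads
`-2i (α × β̄) = 2 (α, β̄) F`.
-/

open scoped ComplexConjugate

/-- The standard complex-bilinear symmetric form on `ℂⁿ`. -/
noncomputable def Bform {n : ℕ} (u v : Fin n → ℂ) : ℂ := ∑ i, u i * v i

/-- Componentwise complex conjugation on `ℂⁿ`. -/
noncomputable def conjn {n : ℕ} (v : Fin n → ℂ) : Fin n → ℂ := fun i => conj (v i)

section Forms

variable {n : ℕ}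

lemma Bform_eq_dotProduct (u v : Fin n → ℂ) : Bform u v = u ⬝ᵥ v := rfl

lemma conjn_eq_star (v : Fin n → ℂ) : conjn v = star v := rfl

lemma Bform_comm (u v : Fin n → ℂ) : Bform u v = Bform v u := dotProduct_comm u v

open scoped ComplexOrder in
lemma eq_zero_of_conjn_eq_self_of_Bform_self_eq_zero {s : Fin n → ℂ} (hs : conjn s = s)
    (h : Bform s s = 0) : s = 0 := by
  rw [← dotProduct_star_self_eq_zero, ← conjn_eq_star, hs]
  exact h

lemma exists_conjn_eq_self_add_I_smul (u : Fin n → ℂ) :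
    ∃ r s : Fin n → ℂ, conjn r = r ∧ conjn s = s ∧ u = r + Complex.I • s := by
  refine ⟨(1 / 2 : ℂ) • (u + conjn u), (-Complex.I / 2) • (u - conjn u), ?_, ?_, ?_⟩
  · ext i; simp [conjn, map_ofNat]; ring
  · ext i; simp [conjn, map_ofNat]; ring
  · ext i
    simp only [conjn, Pi.add_apply, Pi.sub_apply, Pi.smul_apply, smul_eq_mul]
    linear_combination (u i - conj (u i)) / 2 * Complex.I_sq

end Forms

/-- The complex-bilinear extension of a cross product on `ℝⁿ`. -/
structure IsComplexCrossProduct {n : ℕ}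
    (cross : (Fin n → ℂ) →ₗ[ℂ] (Fin n → ℂ) →ₗ[ℂ] (Fin n → ℂ)) : Prop where
  Bform_cross : ∀ u v w, Bform u (cross v w) = Bform (cross u v) w
  cross_cross : ∀ u v w, cross u (cross v w) + cross (cross u v) w
      = (2 * Bform u w) • v - Bform u v • w - Bform v w • u
  conjn_cross : ∀ u v, conjn (cross u v) = cross (conjn u) (conjn v)

namespace IsComplexCrossProduct

variable {n : ℕ} {cross : (Fin n → ℂ) →ₗ[ℂ] (Fin n → ℂ) →ₗ[ℂ] (Fin n → ℂ)}

lemma cross_self_of_conjn_eq_self (hX : IsComplexCrossProduct cross) {a : Fin n → ℂ}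
    (ha : conjn a = a) : cross a a = 0 := by
  set s := cross a a with hs
  have hs_real : conjn s = s := by rw [hs, hX.conjn_cross, ha]
  have hanti : cross a s = -cross s a := by
    have := hX.cross_cross a a a
    rw [← hs] at this
    linear_combination (norm := module) this
  have hzero : Bform a (cross a s) = 0 := by
    have : Bform a (cross a s) = -Bform a (cross a s) := by
      conv_lhs => rw [hanti, Bform_eq_dotProduct, dotProduct_neg, ← Bform_eq_dotProduct,
        hX.Bform_cross a s a, Bform_comm]
    linear_combination this / 2
  refine eq_zero_of_conjn_eq_self_of_Bform_self_eq_zero hs_real ?_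
  rw [← hzero]
  exact (hX.Bform_cross a a s).symm

lemma cross_self (hX : IsComplexCrossProduct cross) (u : Fin n → ℂ) : cross u u = 0 := by
  obtain ⟨r, s, hr, hs, rfl⟩ := exists_conjn_eq_self_add_I_smul u
  have hrs : conjn (r + s) = r + s := by
    rw [conjn_eq_star, star_add, ← conjn_eq_star, ← conjn_eq_star, hr, hs]
  have hsum := hX.cross_self_of_conjn_eq_self hrs
  have hrr := hX.cross_self_of_conjn_eq_self hr
  have hss := hX.cross_self_of_conjn_eq_self hs
  simp only [map_add, map_smul, LinearMap.add_apply, LinearMap.smul_apply, hrr, hss] at hsum ⊢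
  linear_combination (norm := module) Complex.I • hsum

lemma cross_swap (hX : IsComplexCrossProduct cross) (u v : Fin n → ℂ) :
    cross u v = -cross v u := by
  have h := hX.cross_self (u + v)
  simp only [map_add, LinearMap.add_apply, hX.cross_self] at h
  linear_combination (norm := module) h

lemma Bform_eq_zero_of_cross_eq_smul (hX : IsComplexCrossProduct cross) {F v : Fin n → ℂ}
    {c : ℂ} (hc : c ≠ 0) (hv : cross F v = c • v) : Bform F v = 0 := by
  have h : Bform F (cross F v) = 0 := by
    rw [hX.Bform_cross, hX.cross_self, Bform_eq_dotProduct, zero_dotProduct]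
  rw [hv, Bform_eq_dotProduct, dotProduct_smul, smul_eq_mul] at h
  exact (mul_eq_zero.mp h).resolve_left hc

end IsComplexCrossProduct

theorem cross_alpha_conj_beta_general
    (cross : (Fin 7 → ℂ) →ₗ[ℂ] (Fin 7 → ℂ) →ₗ[ℂ] (Fin 7 → ℂ))
    (h1 : ∀ u v w, Bform u (cross v w) = Bform (cross u v) w)
    (h2 : ∀ u v w : Fin 7 → ℂ, cross u (cross v w) + cross (cross u v) w
        = (2 * Bform u w) • v - Bform u v • w - Bform v w • u)
    (hconj : ∀ u v, conjn (cross u v) = cross (conjn u) (conjn v))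
    (F : Fin 7 → ℂ) (hFreal : conjn F = F)
    (α β : Fin 7 → ℂ)
    (hα : cross F α = Complex.I • α)
    (hβ : cross F β = Complex.I • β) :
    cross α (conjn β) = (Complex.I * Bform α (conjn β)) • F := by
  have hX : IsComplexCrossProduct cross := ⟨h1, h2, hconj⟩
  have hβ_conj : cross F (conjn β) = (-Complex.I) • conjn β := by
    rw [← hFreal, ← hconj, hβ, conjn_eq_star, conjn_eq_star, star_smul]
    simp
  have hαF : Bform α F = 0 := by
    rw [Bform_comm]; exact hX.Bform_eq_zero_of_cross_eq_smul Complex.I_ne_zero hα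
  have hFβ : Bform F (conjn β) = 0 :=
    hX.Bform_eq_zero_of_cross_eq_smul (neg_ne_zero.mpr Complex.I_ne_zero) hβ_conj
  have hkey : (-2 * Complex.I) • cross α (conjn β) = (2 * Bform α (conjn β)) • F := by
    have h := h2 α F (conjn β)
    rw [hβ_conj, hX.cross_swap α F, hα, hαF, hFβ] at h
    simp only [map_smul, map_neg, LinearMap.neg_apply, LinearMap.smul_apply] at h
    linear_combination (norm := module) h
  linear_combination (norm := skip) (Complex.I / 2) • hkey
  match_scalars
  · linear_combination Complex.I_sq
  · ring

/-- For F a real unit vector and α, β in the (1,0)-space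
T_F^{1,0} = {v ⊥ F : F × v = iv}, one has α × β̄ = i (α, β̄) F. -/
theorem cross_alpha_conj_beta
    (cross : (Fin 7 → ℂ) →ₗ[ℂ] (Fin 7 → ℂ) →ₗ[ℂ] (Fin 7 → ℂ))
    (h1 : ∀ u v w, Bform u (cross v w) = Bform (cross u v) w)
    (h2 : ∀ u v w : Fin 7 → ℂ, cross u (cross v w) + cross (cross u v) w
        = (2 * Bform u w) • v - Bform u v • w - Bform v w • u)
    (hconj : ∀ u v, conjn (cross u v) = cross (conjn u) (conjn v))
    (F : Fin 7 → ℂ) (hFreal : conjn F = F) (hFunit : Bform F F = 1)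
    (α β : Fin 7 → ℂ)
    (hαperp : Bform F α = 0) (hα : cross F α = Complex.I • α)
    (hβperp : Bform F β = 0) (hβ : cross F β = Complex.I • β) :
    cross α (conjn β) = (Complex.I * Bform α (conjn β)) • F :=
  cross_alpha_conj_beta_general cross h1 h2 hconj F hFreal α β hα hβ
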